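/- Let A be a commutative semi-automaton, S a strongly connected component, and v a word with δ(S, v) ∩ S ≠ ∅. Then v permutes S, i.e., δ(S, v) = S, and consequently v acts injectively on any subset of S. -/
import Mathlib


/-- The action of a complete deterministic semi-automaton, extended to words. -/
def run {Q A : Type*} (δ : Q → A → Q) (q : Q) (w : List A) : Q := w.foldl δ q

/-- State `t` is reachable from `s`. -/
def Reach {Q A : Type*} (δ : Q → A → Q) (s t : Q) : Prop := ∃ u : List A, run δ s u = t

/-- `S` is a strongly connected component: a maximal set of pairwise connected states. -/
def IsSCC {Q A : Type*} (δ : Q → A → Q) (S : Set Q) : Prop :=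
  S.Nonempty ∧ (∀ s ∈ S, ∀ t ∈ S, Reach δ s t) ∧
    ∀ q : Q, (∀ s ∈ S, Reach δ s q ∧ Reach δ q s) → q ∈ S

lemma run_append {Q A : Type*} (δ : Q → A → Q) (q : Q) (u w : List A) :
    run δ q (u ++ w) = run δ (run δ q u) w := by
  simp [run, List.foldl_append]

lemma run_comm_letter {Q A : Type*} (δ : Q → A → Q)
    (hcomm : ∀ (q : Q) (a b : A), δ (δ q a) b = δ (δ q b) a)
    (q : Q) (a : A) (u : List A) : run δ (δ q a) u = δ (run δ q u) a := by
  induction u generalizing q with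
  | nil => rfl
  | cons b t ih =>
    simp only [run, List.foldl_cons] at *
    rw [hcomm q a b, ih]

lemma run_comm {Q A : Type*} (δ : Q → A → Q)
    (hcomm : ∀ (q : Q) (a b : A), δ (δ q a) b = δ (δ q b) a)
    (q : Q) (u w : List A) : run δ (run δ q u) w = run δ (run δ q w) u := by
  induction u generalizing q with
  | nil => rfl
  | cons a t ih =>
    have : run δ q (a :: t) = run δ (δ q a) t := rfl
    rw [this, ih (δ q a), run_comm_letter δ hcomm]
    rfl

theorem word_meeting_component_permutes_it {Q A : Type*} [Fintype Q] (δ : Q → A → Q)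
    (hcomm : ∀ (q : Q) (a b : A), δ (δ q a) b = δ (δ q b) a)
    (S : Set Q) (hS : IsSCC δ S) (v : List A)
    (h : ((fun q => run δ q v) '' S ∩ S).Nonempty) :
    (fun q => run δ q v) '' S = S ∧ Set.InjOn (fun q => run δ q v) S := by
  obtain ⟨t, ⟨s₀, hs₀, hts⟩, htS⟩ := h
  obtain ⟨hne, hconn, hmax⟩ := hS
  -- MapsTo
  have hmaps : Set.MapsTo (fun q => run δ q v) S S := by
    intro s hs
    apply hmax
    intro s' hs'
    constructor
    · obtain ⟨u₁, hu₁⟩ := hconn s' hs' s hs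
      exact ⟨u₁ ++ v, by rw [run_append, hu₁]⟩
    · obtain ⟨u₁, hu₁⟩ := hconn s hs s₀ hs₀
      have ht' : run δ (run δ s v) u₁ = t := by
        rw [run_comm δ hcomm, hu₁]; exact hts
      obtain ⟨w₀, hw₀⟩ := hconn t htS s' hs'
      exact ⟨u₁ ++ w₀, by rw [run_append, ht', hw₀]⟩
  -- SurjOn
  have hsurj : Set.SurjOn (fun q => run δ q v) S S := by
    intro s hs
    have hsv : run δ s v ∈ S := hmaps hs
    obtain ⟨u, hu⟩ := hconn _ hsv s hs
    refine ⟨run δ s u, ?_, ?_⟩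
    · apply hmax
      intro s' hs'
      constructor
      · obtain ⟨u₁, hu₁⟩ := hconn s' hs' s hs
        exact ⟨u₁ ++ u, by rw [run_append, hu₁]⟩
      · obtain ⟨u₂, hu₂⟩ := hconn s hs s' hs'
        refine ⟨v ++ u₂, by rw [run_append, run_comm δ hcomm s u v, hu, hu₂]⟩
    · show run δ (run δ s u) v = s
      rw [run_comm δ hcomm, hu]
  have hbij := (Set.Finite.surjOn_iff_bijOn_of_mapsTo (Set.toFinite S) hmaps).mp hsurj
  exact ⟨Set.eq_of_subset_of_subset (Set.image_subset_iff.mpr hmaps) hsurj, hbij.injOn⟩
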